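/- arXiv:1910.12664 — 8 statements merged into one kernel-verified Lean document; each statement's English description precedes it below -/
import Mathlib

section
/- Let r be an odd prime and x an odd integer coprime with r. Then 2r divides Ψ_{2r}(x) if and only if x ≡ 1 (mod r) or x ≡ -1 (mod r). -/
/-!
In a domain of prime characteristic `p`, Frobenius gives
`(∑_{i < m p} y^i) (y - 1) = y^{m p} - 1 = (y^m - 1)^p`, so the geometric sum vanishes exactly
when `y^m = 1` (for `y = 1` the sum is `m p = 0`). Applied in `ZMod r` with `m = 2` this says
`r ∣ Ψ_{2r}(x) ↔ x ≡ ±1 (mod r)`; applied in `ZMod 2` with `m = r` it shows that `Ψ_{2r}(x)` is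
even for odd `x`. Since `r` is odd, the two divisibilities combine to divisibility by `2r`.
-/

open Finset

theorem geom_sum_range_mul_char_eq_zero_iff {R : Type*} [CommRing R] [NoZeroDivisors R]
    {p : ℕ} [Fact p.Prime] [CharP R p] (y : R) (m : ℕ) :
    ∑ i ∈ range (m * p), y ^ i = 0 ↔ y ^ m = 1 := by
  rcases eq_or_ne y 1 with rfl | hy
  · simp
  have key : (∑ i ∈ range (m * p), y ^ i) * (y - 1) = (y ^ m - 1) ^ p := by
    rw [geom_sum_mul, sub_pow_char, one_pow, pow_mul]
  rw [← mul_eq_zero_iff_right (sub_ne_zero.mpr hy), key,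
    pow_eq_zero_iff (Fact.out : p.Prime).ne_zero, sub_eq_zero]

theorem Int.prime_dvd_geom_sum_range_mul_iff {p : ℕ} [Fact p.Prime] (x : ℤ) (m : ℕ) :
    (p : ℤ) ∣ ∑ i ∈ Finset.range (m * p), x ^ i ↔ (x : ZMod p) ^ m = 1 := by
  rw [← ZMod.intCast_zmod_eq_zero_iff_dvd, Int.cast_sum]
  simp only [Int.cast_pow]
  exact geom_sum_range_mul_char_eq_zero_iff _ m

theorem two_r_dvd_psi_iff_general (r : ℕ) (hr : r.Prime) (hrodd : Odd r) (x : ℤ)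
    (hxodd : Odd x) :
    ((2 * r : ℕ) : ℤ) ∣ ∑ i ∈ Finset.range (2 * r), x ^ i ↔
      x ≡ 1 [ZMOD r] ∨ x ≡ -1 [ZMOD r] := by
  have : Fact r.Prime := ⟨hr⟩
  have two_dvd : (2 : ℤ) ∣ ∑ i ∈ range (2 * r), x ^ i := by
    rw [mul_comm]
    exact_mod_cast (Int.prime_dvd_geom_sum_range_mul_iff (p := 2) x r).mpr
      (by rw [hxodd.intCast_zmod_two, one_pow])
  have r_dvd_iff : (r : ℤ) ∣ ∑ i ∈ range (2 * r), x ^ i ↔ x ≡ 1 [ZMOD r] ∨ x ≡ -1 [ZMOD r] := by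
    rw [Int.prime_dvd_geom_sum_range_mul_iff, sq_eq_one_iff, ← Int.cast_one, ← Int.cast_neg,
      ZMod.intCast_eq_intCast_iff, ZMod.intCast_eq_intCast_iff]
  have coprime : IsCoprime (2 : ℤ) r := Nat.isCoprime_iff_coprime.mpr hrodd.coprime_two_left
  rw [← r_dvd_iff, Nat.cast_mul, Nat.cast_two]
  exact ⟨(dvd_mul_left _ _).trans, coprime.mul_dvd two_dvd⟩

/-- For `r` an odd prime and `x` odd, coprime with `r`:
`2r ∣ Ψ_{2r}(x)` iff `x ≡ ±1 (mod r)`. -/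
theorem two_r_dvd_psi_iff (r : ℕ) (hr : r.Prime) (hrodd : Odd r) (x : ℤ)
    (hxodd : Odd x) (hx : IsCoprime x (r : ℤ)) :
    ((2 * r : ℕ) : ℤ) ∣ ∑ i ∈ Finset.range (2 * r), x ^ i ↔
      x ≡ 1 [ZMOD r] ∨ x ≡ -1 [ZMOD r] :=
  two_r_dvd_psi_iff_general r hr hrodd x hxodd
end

section
/- Let r < r' be odd primes with r not dividing r' - 1, and let x be an integer coprime with rr'. Then rr' divides Ψ_{rr'}(x) if and only if x ≡ 1 (mod rr'). -/
/-!
If a prime `p` divides `n` and `n` is coprime to `p - 1`, then modulo `p` a root `y ≠ 0` of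
`Ψ_n` satisfies `y ^ n = 1` and `y ^ (p - 1) = 1`, hence `y = 1`; conversely `Ψ_n(1) = n ≡ 0`.
Both `r` and `r'` qualify for `n = r r'`: `r' ∤ r - 1` because `r - 1 < r'`, and `r ∤ r' - 1`
by hypothesis. The Chinese remainder theorem then combines the two prime moduli.
-/

theorem ZMod.geom_sum_eq_zero_iff_eq_one {p n : ℕ} [Fact p.Prime] (hpn : p ∣ n)
    (hn : n.Coprime (p - 1)) {y : ZMod p} (hy : y ≠ 0) :
    ∑ i ∈ Finset.range n, y ^ i = 0 ↔ y = 1 := by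
  constructor
  · intro h
    have hyn : y ^ n = 1 := by
      rw [← sub_eq_zero, ← geom_sum_mul, h, zero_mul]
    exact (pow_eq_one_iff_of_coprime hn).mp ⟨hyn, ZMod.pow_card_sub_one_eq_one hy⟩
  · rintro rfl
    simpa using (ZMod.natCast_eq_zero_iff n p).mpr hpn

theorem Int.prime_dvd_geom_sum_iff_modEq_one {p n : ℕ} (hp : p.Prime) (hpn : p ∣ n)
    (hn : n.Coprime (p - 1)) {x : ℤ} (hx : ¬ (p : ℤ) ∣ x) :
    (p : ℤ) ∣ ∑ i ∈ Finset.range n, x ^ i ↔ x ≡ 1 [ZMOD p] := by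
  have : Fact p.Prime := ⟨hp⟩
  rw [← ZMod.intCast_zmod_eq_zero_iff_dvd] at hx ⊢
  rw [← ZMod.intCast_eq_intCast_iff, Int.cast_one]
  push_cast
  exact ZMod.geom_sum_eq_zero_iff_eq_one hpn hn hx

theorem Nat.Prime.mul_coprime_sub_one {p q : ℕ} (hq : q.Prime) (hp : 0 < p)
    (hqp : ¬ q ∣ p - 1) : (p * q).Coprime (p - 1) :=
  Nat.Coprime.mul_left ((Nat.coprime_self_sub_right hp).mpr (Nat.coprime_one_right p))
    ((Nat.Prime.coprime_iff_not_dvd hq).mpr hqp)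

theorem IsCoprime.mul_dvd_iff {R : Type*} [CommSemiring R] {x y z : R} (H : IsCoprime x y) :
    x * y ∣ z ↔ x ∣ z ∧ y ∣ z :=
  ⟨fun h => ⟨dvd_of_mul_right_dvd h, dvd_of_mul_left_dvd h⟩, fun h => H.mul_dvd h.1 h.2⟩

theorem Nat.Prime.not_intCast_dvd_of_isCoprime {p : ℕ} (hp : p.Prime) {x : ℤ}
    (hx : IsCoprime x p) : ¬ (p : ℤ) ∣ x :=
  ((Nat.prime_iff_prime_int.mp hp).irreducible.coprime_iff_not_dvd).mp hx.symm

theorem rr'_dvd_psi_iff_general (r r' : ℕ) (hr : r.Prime) (hr' : r'.Prime)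
    (hlt : r < r') (hnd : ¬ r ∣ (r' - 1))
    (x : ℤ) (hx : IsCoprime x ((r * r' : ℕ) : ℤ)) :
    ((r * r' : ℕ) : ℤ) ∣ ∑ i ∈ Finset.range (r * r'), x ^ i ↔
      x ≡ 1 [ZMOD (r * r' : ℕ)] := by
  have hcop : IsCoprime (r : ℤ) r' :=
    Nat.isCoprime_iff_coprime.mpr ((Nat.coprime_primes hr hr').mpr hlt.ne)
  push_cast at hx ⊢
  have hxr := hr.not_intCast_dvd_of_isCoprime hx.of_mul_right_left
  have hxr' := hr'.not_intCast_dvd_of_isCoprime hx.of_mul_right_right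
  have hn : (r * r').Coprime (r - 1) :=
    hr'.mul_coprime_sub_one hr.pos (Nat.not_dvd_of_pos_of_lt (Nat.sub_pos_of_lt hr.one_lt) (by omega))
  have hn' : (r * r').Coprime (r' - 1) := mul_comm r r' ▸ hr.mul_coprime_sub_one hr'.pos hnd
  rw [Int.modEq_iff_dvd, hcop.mul_dvd_iff, hcop.mul_dvd_iff, ← Int.modEq_iff_dvd,
    ← Int.modEq_iff_dvd, Int.prime_dvd_geom_sum_iff_modEq_one hr (dvd_mul_right r r') hn hxr,
    Int.prime_dvd_geom_sum_iff_modEq_one hr' (dvd_mul_left r' r) hn' hxr']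

/-- For `r < r'` odd primes with `r ∤ r' - 1` and `gcd(x, rr') = 1`:
`rr' ∣ Ψ_{rr'}(x)` iff `x ≡ 1 (mod rr')`. -/
theorem rr'_dvd_psi_iff (r r' : ℕ) (hr : r.Prime) (hr' : r'.Prime)
    (hrodd : Odd r) (hr'odd : Odd r') (hlt : r < r') (hnd : ¬ r ∣ (r' - 1))
    (x : ℤ) (hx : IsCoprime x ((r * r' : ℕ) : ℤ)) :
    ((r * r' : ℕ) : ℤ) ∣ ∑ i ∈ Finset.range (r * r'), x ^ i ↔
      x ≡ 1 [ZMOD (r * r' : ℕ)] :=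
  rr'_dvd_psi_iff_general r r' hr hr' hlt hnd x hx
end

section
/- Let b = r_1 r_2 ⋯ r_ℓ be a product of distinct primes with r_1 < r_2 < ⋯ < r_ℓ, and let x be an integer coprime with b. Then b divides Ψ_b(x) if and only if x ≡ 1 (mod r_1) and x^{b/r_i} ≡ 1 (mod r_i) for all i = 2, …, ℓ. -/
/-!
Modulo a prime `p ∣ b`, the identity `(x - 1) Ψ_b(x) = x^b - 1` shows that `p ∣ Ψ_b(x)` exactly
when `x^b ≡ 1`, and Fermat's little theorem rewrites `x^b` as `x^{b/p}`. As `b` is squarefree, `b`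
divides `Ψ_b(x)` iff every `r_i` does. For the smallest prime `r_1`, every prime factor of
`b/r_1` exceeds `r_1 - 1`, so `y ↦ y^{b/r_1}` is injective on `(ℤ/r_1)ˣ` and the condition
becomes `x ≡ 1 (mod r_1)`.
-/

open Finset

theorem geom_sum_eq_zero_iff_pow_eq_one {R : Type*} [CommRing R] [IsDomain R] {n : ℕ}
    (hn : (n : R) = 0) (y : R) : ∑ i ∈ range n, y ^ i = 0 ↔ y ^ n = 1 := by
  rcases eq_or_ne y 1 with rfl | hy
  · simp [hn]
  · rw [← sub_eq_zero (a := y ^ n), ← mul_geom_sum, mul_eq_zero, or_iff_right (sub_ne_zero.2 hy)]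

namespace FiniteField

variable {K : Type*} [Field K] [Fintype K]

theorem pow_eq_pow_div_card_of_dvd {n : ℕ} (hn : Fintype.card K ∣ n) (y : K) :
    y ^ n = y ^ (n / Fintype.card K) := by
  conv_lhs => rw [← Nat.div_mul_cancel hn, pow_mul, pow_card]

theorem pow_eq_one_iff_of_coprime_card_sub_one {m : ℕ} (hm : m ≠ 0)
    (hcop : m.Coprime (Fintype.card K - 1)) {y : K} : y ^ m = 1 ↔ y = 1 := by
  refine ⟨fun h => (pow_eq_one_iff_of_coprime hcop).1 ⟨h, pow_card_sub_one_eq_one y ?_⟩,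
    by rintro rfl; exact one_pow m⟩
  rintro rfl
  simp [zero_pow hm] at h

end FiniteField

namespace Int

theorem prime_dvd_geom_sum_iff {p n : ℕ} (hp : p.Prime) (hpn : p ∣ n) (x : ℤ) :
    (p : ℤ) ∣ ∑ i ∈ Finset.range n, x ^ i ↔ x ^ (n / p) ≡ 1 [ZMOD p] := by
  have := Fact.mk hp
  rw [← ZMod.intCast_zmod_eq_zero_iff_dvd, ← ZMod.intCast_eq_intCast_iff]
  push_cast
  rw [geom_sum_eq_zero_iff_pow_eq_one ((ZMod.natCast_eq_zero_iff n p).2 hpn)]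
  conv_lhs => rw [FiniteField.pow_eq_pow_div_card_of_dvd (by rwa [ZMod.card]), ZMod.card]

theorem pow_modEq_one_iff_of_coprime {p m : ℕ} (hp : p.Prime) (hm : m ≠ 0)
    (hcop : m.Coprime (p - 1)) (x : ℤ) : x ^ m ≡ 1 [ZMOD p] ↔ x ≡ 1 [ZMOD p] := by
  have := Fact.mk hp
  simp only [← ZMod.intCast_eq_intCast_iff, Int.cast_pow, Int.cast_one]
  exact FiniteField.pow_eq_one_iff_of_coprime_card_sub_one hm (by rwa [ZMod.card])

theorem natCast_prod_primes_dvd_iff {ι : Type*} [Fintype ι] {r : ι → ℕ}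
    (hr : ∀ i, (r i).Prime) (hinj : Function.Injective r) (a : ℤ) :
    ((∏ i, r i : ℕ) : ℤ) ∣ a ↔ ∀ i, (r i : ℤ) ∣ a := by
  push_cast
  refine ⟨fun h i => (dvd_prod_of_mem _ (mem_univ i)).trans h, Fintype.prod_dvd_of_coprime ?_⟩
  exact fun i j hij => Nat.isCoprime_iff_coprime.2 <|
    (Nat.coprime_primes (hr i) (hr j)).2 (hinj.ne hij)

end Int

theorem Nat.coprime_prod_primes_sub_one {ι : Type*} (s : Finset ι) {r : ι → ℕ}
    (hr : ∀ i ∈ s, (r i).Prime) {p : ℕ} (hp : 1 < p) (hle : ∀ i ∈ s, p ≤ r i) :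
    (∏ i ∈ s, r i).Coprime (p - 1) :=
  Nat.Coprime.prod_left fun i hi =>
    Nat.coprime_of_lt_prime (by omega) (by grind) (hr i hi)

theorem squarefree_dvd_psi_iff_general (ℓ : ℕ) (hℓ : 0 < ℓ) (r : Fin ℓ → ℕ)
    (hprime : ∀ i, (r i).Prime) (hmono : StrictMono r)
    (b : ℕ) (hb : b = ∏ i, r i)
    (x : ℤ) :
    ((b : ℤ) ∣ ∑ i ∈ Finset.range b, x ^ i) ↔
      (x ≡ 1 [ZMOD r ⟨0, hℓ⟩] ∧
        ∀ i : Fin ℓ, i ≠ ⟨0, hℓ⟩ → x ^ (b / r i) ≡ 1 [ZMOD r i]) := by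
  set i₀ : Fin ℓ := ⟨0, hℓ⟩
  have hrb : ∀ i, r i ∣ b := fun i => hb ▸ dvd_prod_of_mem r (mem_univ i)
  have hb_dvd : (b : ℤ) ∣ ∑ i ∈ range b, x ^ i ↔ ∀ i, x ^ (b / r i) ≡ 1 [ZMOD r i] :=
    (hb ▸ Int.natCast_prod_primes_dvd_iff hprime hmono.injective _).trans <|
      forall_congr' fun i => Int.prime_dvd_geom_sum_iff (hprime i) (hrb i) x
  have hcop : (b / r i₀).Coprime (r i₀ - 1) :=
    (hb ▸ Nat.coprime_prod_primes_sub_one univ (fun i _ => hprime i) (hprime i₀).one_lt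
      fun i _ => hmono.monotone (Nat.zero_le i.val)).coprime_dvd_left (Nat.div_dvd_of_dvd (hrb i₀))
  have hb_ne : b ≠ 0 := hb ▸ prod_ne_zero_iff.2 fun i _ => (hprime i).ne_zero
  have hquot_ne : b / r i₀ ≠ 0 :=
    (Nat.div_pos (Nat.le_of_dvd (Nat.pos_of_ne_zero hb_ne) (hrb i₀)) (hprime i₀).pos).ne'
  have hfirst := Int.pow_modEq_one_iff_of_coprime (hprime i₀) hquot_ne hcop x
  rw [hb_dvd]
  constructor
  · exact fun h => ⟨hfirst.1 (h i₀), fun i _ => h i⟩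
  · rintro ⟨h₀, h⟩ i
    by_cases hi : i = i₀
    · exact hi ▸ hfirst.2 h₀
    · exact h i hi

/-- For `b = r_1 ⋯ r_ℓ` a product of distinct primes `r_1 < ⋯ < r_ℓ` and `gcd(x,b)=1`:
`b ∣ Ψ_b(x)` iff `x ≡ 1 (mod r_1)` and `x^{b/r_i} ≡ 1 (mod r_i)` for `i = 2, …, ℓ`. -/
theorem squarefree_dvd_psi_iff (ℓ : ℕ) (hℓ : 0 < ℓ) (r : Fin ℓ → ℕ)
    (hprime : ∀ i, (r i).Prime) (hmono : StrictMono r)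
    (b : ℕ) (hb : b = ∏ i, r i)
    (x : ℤ) (hx : IsCoprime x (b : ℤ)) :
    ((b : ℤ) ∣ ∑ i ∈ Finset.range b, x ^ i) ↔
      (x ≡ 1 [ZMOD r ⟨0, hℓ⟩] ∧
        ∀ i : Fin ℓ, i ≠ ⟨0, hℓ⟩ → x ^ (b / r i) ≡ 1 [ZMOD r i]) :=
  squarefree_dvd_psi_iff_general ℓ hℓ r hprime hmono b hb x
end

section
/- Let r be a prime, t a positive integer, and x an integer coprime with r. Then r^t divides Ψ_{r^t}(x) if and only if the multiplicative order of x modulo r^t is a power of r (equal to r^h for some 0 ≤ h ≤ t-1). -/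
/-!
Both sides are equivalent to `r ∣ x - 1`. Modulo `r` the Frobenius identity `y ^ r ^ n = y` holds,
so `x ^ r ^ h ≡ 1` forces `x ≡ 1`, and for `y ≢ 1` the identity `(y - 1) Ψ_{r^t}(y) = y ^ r ^ t - 1 ≡ y - 1`
gives `Ψ_{r^t}(y) ≡ 1`. Conversely, if `r ∣ x - 1` then `r ^ t ∣ x ^ r ^ (t - 1) - 1`, so the order
of `x` modulo `r ^ t` divides `r ^ (t - 1)`; and `Ψ_{r^t}(x) = ∏_{k < t} Ψ_r(x ^ r ^ k)` is a product
of `t` factors, each divisible by `r`.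
-/

open Finset

theorem geom_sum_range_mul {R : Type*} [CommSemiring R] (x : R) (m n : ℕ) :
    ∑ i ∈ range (m * n), x ^ i = (∑ i ∈ range m, x ^ i) * ∑ j ∈ range n, (x ^ m) ^ j := by
  induction n with
  | zero => simp
  | succ n ih =>
    rw [Nat.mul_succ, sum_range_add, ih, sum_range_succ, mul_add, sum_mul _ _ ((x ^ m) ^ n)]
    exact congrArg _ <| Finset.sum_congr rfl fun i _ => by rw [pow_add, pow_mul, mul_comm]

theorem pow_dvd_geom_sum_pow_of_dvd_sub_one {R : Type*} [CommRing R] {p : ℕ} {x : R}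
    (h : (p : R) ∣ x - 1) (t : ℕ) : (p : R) ^ t ∣ ∑ i ∈ range (p ^ t), x ^ i := by
  induction t with
  | zero => simp
  | succ t ih =>
    have hpow : (p : R) ∣ x ^ p ^ t - 1 := h.trans (by simpa using sub_dvd_pow_sub_pow x 1 (p ^ t))
    rw [pow_succ, pow_succ, geom_sum_range_mul]
    simpa using mul_dvd_mul ih (dvd_geom_sum₂_self hpow)

theorem FiniteField.geom_sum_card_pow_eq_one {K : Type*} [Field K] [Fintype K] {y : K}
    (hy : y ≠ 1) (t : ℕ) : ∑ i ∈ range (Fintype.card K ^ t), y ^ i = 1 := by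
  refine mul_right_cancel₀ (sub_ne_zero.mpr hy) ?_
  rw [geom_sum_mul, FiniteField.pow_card_pow, one_mul]

theorem Int.prime_pow_dvd_geom_sum_iff {r : ℕ} (hr : r.Prime) {t : ℕ} (ht : 0 < t) {x : ℤ} :
    (r : ℤ) ^ t ∣ ∑ i ∈ Finset.range (r ^ t), x ^ i ↔ (r : ℤ) ∣ x - 1 := by
  have := Fact.mk hr
  refine ⟨fun hdvd => ?_, fun h => pow_dvd_geom_sum_pow_of_dvd_sub_one h t⟩
  rw [← ZMod.intCast_eq_intCast_iff_dvd_sub, Int.cast_one, eq_comm]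
  by_contra hx
  have hsum : ((∑ i ∈ Finset.range (r ^ t), x ^ i : ℤ) : ZMod r) = 0 :=
    (ZMod.intCast_zmod_eq_zero_iff_dvd _ r).mpr ((dvd_pow_self _ ht.ne').trans hdvd)
  push_cast at hsum
  have hone := FiniteField.geom_sum_card_pow_eq_one hx t
  rw [ZMod.card, hsum] at hone
  exact zero_ne_one hone

theorem ZMod.exists_orderOf_intCast_eq_prime_pow_iff {r : ℕ} (hr : r.Prime) {t : ℕ} (ht : 0 < t)
    {x : ℤ} : (∃ h ≤ t - 1, orderOf (x : ZMod (r ^ t)) = r ^ h) ↔ (r : ℤ) ∣ x - 1 := by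
  have := Fact.mk hr
  constructor
  · rintro ⟨h, -, hord⟩
    have hpow : (x : ZMod (r ^ t)) ^ r ^ h = 1 := hord ▸ pow_orderOf_eq_one _
    have hx : (x : ZMod r) ^ r ^ h = 1 := by
      simpa only [map_pow, map_intCast, map_one] using
        congrArg (ZMod.castHom (dvd_pow_self r ht.ne') (ZMod r)) hpow
    rw [ZMod.pow_card_pow] at hx
    rwa [← ZMod.intCast_eq_intCast_iff_dvd_sub, Int.cast_one, eq_comm]
  · intro h
    have hdvd : ((r ^ t : ℕ) : ℤ) ∣ x ^ r ^ (t - 1) - 1 := by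
      simpa [Nat.sub_add_cancel ht] using dvd_sub_pow_of_dvd_sub h (t - 1)
    have hpow : (x : ZMod (r ^ t)) ^ r ^ (t - 1) = 1 := by
      rw [← sub_eq_zero]
      exact_mod_cast (ZMod.intCast_zmod_eq_zero_iff_dvd _ _).mpr hdvd
    exact (Nat.dvd_prime_pow hr).mp (orderOf_dvd_of_pow_eq_one hpow)

theorem prime_pow_dvd_psi_iff_general (r : ℕ) (hr : r.Prime) (t : ℕ) (ht : 0 < t)
    (x : ℤ) :
    ((r ^ t : ℕ) : ℤ) ∣ ∑ i ∈ Finset.range (r ^ t), x ^ i ↔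
      ∃ h : ℕ, h ≤ t - 1 ∧ orderOf (x : ZMod (r ^ t)) = r ^ h := by
  rw [Nat.cast_pow, Int.prime_pow_dvd_geom_sum_iff hr ht,
    ZMod.exists_orderOf_intCast_eq_prime_pow_iff hr ht]

/-- For `r` prime, `t ≥ 1` and `gcd(x,r)=1`: `r^t ∣ Ψ_{r^t}(x)` iff the multiplicative
order of `x` modulo `r^t` equals `r^h` for some `0 ≤ h ≤ t-1`. -/
theorem prime_pow_dvd_psi_iff (r : ℕ) (hr : r.Prime) (t : ℕ) (ht : 0 < t)
    (x : ℤ) (hx : IsCoprime x (r : ℤ)) :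
    ((r ^ t : ℕ) : ℤ) ∣ ∑ i ∈ Finset.range (r ^ t), x ^ i ↔
      ∃ h : ℕ, h ≤ t - 1 ∧ orderOf (x : ZMod (r ^ t)) = r ^ h :=
  prime_pow_dvd_psi_iff_general r hr t ht x
end

section
/- Let p be a prime and a, b positive integers with gcd(b, p) = 1. If φ(rad(b)) divides a, then b divides Ψ_b(p^a) = ((p^a)^b - 1)/(p^a - 1), where rad(b) is the product of the distinct primes dividing b and φ is Euler's totient function. -/
/-!
Write `n = p ^ a`. For every prime `q ∣ b` we have `φ q ∣ φ (rad b) ∣ a`, so Euler's theorem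
gives `n ≡ 1 [MOD q]`. Peeling prime factors off `b = q * c`, the geometric sum splits as
`Ψ_{q c}(n) = Ψ_q(n) · Ψ_c(n ^ q)`; here `q ∣ Ψ_q(n)` because all `q` terms are `≡ 1`, and
`c ∣ Ψ_c(n ^ q)` by induction since `n ^ q ≡ 1` modulo every prime factor of `c`.
-/

open Finset

namespace Nat

theorem pow_modEq_one_of_totient_dvd {x n a : ℕ} (h : x.Coprime n) (ha : φ n ∣ a) :
    x ^ a ≡ 1 [MOD n] := by
  obtain ⟨t, rfl⟩ := ha
  simpa [pow_mul] using (ModEq.pow_totient h).pow t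

theorem dvd_geom_sum_self_of_modEq_one {m n : ℕ} (h : n ≡ 1 [MOD m]) :
    m ∣ ∑ i ∈ range m, n ^ i := by
  have hn : (n : ZMod m) = 1 := by simpa using (ZMod.natCast_eq_natCast_iff n 1 m).2 h
  rw [← ZMod.natCast_eq_zero_iff]
  push_cast
  simp [hn]

theorem dvd_geom_sum_of_forall_mem_primeFactors_modEq_one {b n : ℕ}
    (h : ∀ q ∈ b.primeFactors, n ≡ 1 [MOD q]) : b ∣ ∑ i ∈ range b, n ^ i := by
  induction b using induction_on_primes generalizing n with
  | zero => simp
  | one => simp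
  | prime_mul q c hq ih =>
    rcases eq_or_ne c 0 with rfl | hc
    · simp
    have hqc : q * c ≠ 0 := mul_ne_zero hq.ne_zero hc
    rw [geom_sum_range_mul]
    refine mul_dvd_mul (dvd_geom_sum_self_of_modEq_one (h q ?_)) (ih fun r hr => ?_)
    · exact mem_primeFactors.2 ⟨hq, dvd_mul_right q c, hqc⟩
    · simpa using (h r (primeFactors_mono (dvd_mul_left c q) hqc hr)).pow q

end Nat

theorem dvd_psi_of_totient_radical_dvd_general (p : ℕ) (a b : ℕ)
    (hcop : Nat.Coprime b p)
    (hdvd : Nat.totient (∏ q ∈ b.primeFactors, q) ∣ a) :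
    b ∣ ∑ i ∈ Finset.range b, (p ^ a) ^ i := by
  refine Nat.dvd_geom_sum_of_forall_mem_primeFactors_modEq_one fun q hq => ?_
  have hpq : p.Coprime q := (hcop.coprime_dvd_left (Nat.dvd_of_mem_primeFactors hq)).symm
  have htot : q.totient ∣ a := (Nat.totient_dvd_of_dvd (dvd_prod_of_mem _ hq)).trans hdvd
  exact Nat.pow_modEq_one_of_totient_dvd hpq htot

/-- If `p` is prime, `gcd(b,p)=1` and `φ(rad(b)) ∣ a`, then `b ∣ Ψ_b(p^a)`. -/
theorem dvd_psi_of_totient_radical_dvd (p : ℕ) (hp : p.Prime) (a b : ℕ)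
    (ha : 0 < a) (hb : 0 < b) (hcop : Nat.Coprime b p)
    (hdvd : Nat.totient (∏ q ∈ b.primeFactors, q) ∣ a) :
    b ∣ ∑ i ∈ Finset.range b, (p ^ a) ^ i :=
  dvd_psi_of_totient_radical_dvd_general p a b hcop hdvd
end

section
/- Let q = p^m with p prime and let k divide q - 1, with n = (q-1)/k. The set R_k = {x^k : x ∈ F_q^*} of nonzero k-th powers additively generates F_q if and only if (q-1)/(p^a - 1) does not divide k for every 1 ≤ a ≤ m-1. -/
/-!
The nonzero `k`-th powers form a multiplicative monoid, so their additive span is a subring of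
`F`, hence a subfield `𝔽_{p^b}` with `b ∣ m`. It is proper exactly when every nonzero `k`-th
power satisfies `y ^ p ^ b = y` for some `b ∣ m`, `b < m`; by cyclicity of `Fˣ` this means
`q - 1 ∣ k (p ^ b - 1)`, i.e. `(q - 1) / (p ^ b - 1) ∣ k`. For `a ∤ m` the truncated quotient
`(q - 1) / (p ^ a - 1)` does not even divide `q - 1`, so it cannot divide `k`.
-/

theorem Nat.dvd_of_div_pow_sub_one_dvd {p a m : ℕ} (hp : 1 < p) (ha : 0 < a) (ham : a < m)
    (h : (p ^ m - 1) / (p ^ a - 1) ∣ p ^ m - 1) : a ∣ m := by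
  -- `e` is the truncated quotient; it divides the remainder `p ^ (m % a) - 1` but exceeds it.
  set e := (p ^ m - 1) / (p ^ a - 1)
  have hrem : (p ^ a - 1) * e + (p ^ (m % a) - 1) = p ^ m - 1 := by
    rw [← Nat.pow_sub_one_mod_pow_sub_one]; exact Nat.div_add_mod _ _
  have hdvd : e ∣ p ^ (m % a) - 1 := (Nat.dvd_add_right (dvd_mul_left e _)).mp (hrem ▸ h)
  have hlt : p ^ (m % a) - 1 < e := by
    have hmod : m % a ≤ m - a := Nat.mod_eq_sub_mod ham.le ▸ Nat.mod_le _ _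
    have hpa : 0 < p ^ a - 1 := Nat.sub_pos_of_lt (Nat.one_lt_pow ha.ne' hp)
    have hle : p ^ (m - a) ≤ e := by
      rw [Nat.le_div_iff_mul_le hpa, Nat.mul_sub, mul_one, ← pow_add, Nat.sub_add_cancel ham.le]
      have := Nat.one_le_pow (m - a) p (by omega)
      omega
    calc p ^ (m % a) - 1 < p ^ (m % a) := Nat.sub_lt (by positivity) one_pos
      _ ≤ p ^ (m - a) := Nat.pow_le_pow_right (by omega) hmod
      _ ≤ e := hle
  have hzero := Nat.eq_zero_of_dvd_of_lt hdvd hlt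
  have hone : p ^ (m % a) = 1 := by have := Nat.one_le_pow (m % a) p (by omega); omega
  exact Nat.dvd_of_mod_eq_zero ((Nat.pow_eq_one.mp hone).resolve_left hp.ne')

def nonzeroPowers (M : Type*) [CommMonoidWithZero M] [NoZeroDivisors M] [Nontrivial M] (k : ℕ) :
    Submonoid M where
  carrier := {y | ∃ x : M, x ≠ 0 ∧ y = x ^ k}
  one_mem' := ⟨1, one_ne_zero, (one_pow k).symm⟩
  mul_mem' := by
    rintro _ _ ⟨x, hx, rfl⟩ ⟨y, hy, rfl⟩
    exact ⟨x * y, mul_ne_zero hx hy, (mul_pow x y k).symm⟩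

theorem AddSubgroup.closure_submonoid_eq_top_iff {R : Type*} [Ring R] (M : Submonoid R) :
    AddSubgroup.closure (M : Set R) = ⊤ ↔ Subring.closure (M : Set R) = ⊤ := by
  simp only [AddSubgroup.eq_top_iff', Subring.eq_top_iff', Subring.mem_closure_iff,
    Submonoid.closure_eq]

theorem Subring.closure_pow_eq_self_iff {R : Type*} [CommRing R] (p : ℕ) [ExpChar R p] (b : ℕ)
    {s : Set R} : (∀ x ∈ Subring.closure s, x ^ p ^ b = x) ↔ ∀ x ∈ s, x ^ p ^ b = x := by
  have hfix : ∀ x, x ∈ (iterateFrobenius R p b).eqLocus (RingHom.id R) ↔ x ^ p ^ b = x := by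
    simp [RingHom.mem_eqLocus, iterateFrobenius_def]
  exact ⟨fun h x hx => h x (Subring.subset_closure hx), fun h x hx =>
    (hfix x).mp (Subring.closure_le.mpr (fun y hy => (hfix y).mpr (h y hy)) hx)⟩

theorem pow_eq_self_iff_of_ne_zero {M₀ : Type*} [MonoidWithZero M₀] [IsLeftCancelMulZero M₀]
    {x : M₀} (hx : x ≠ 0) {N : ℕ} (hN : 0 < N) : x ^ N = x ↔ x ^ (N - 1) = 1 := by
  rw [← Nat.sub_add_cancel hN, pow_succ', Nat.add_sub_cancel, mul_eq_left₀ hx]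

namespace FiniteField

variable {F : Type*} [Field F] [Fintype F]

theorem forall_pow_pow_eq_self_iff (k : ℕ) {N : ℕ} (hN : 0 < N) :
    (∀ x : F, x ≠ 0 → (x ^ k) ^ N = x ^ k) ↔ Fintype.card F - 1 ∣ k * (N - 1) := by
  rw [← forall_pow_eq_one_iff]
  refine ⟨fun h u => Units.ext ?_, fun h x hx => ?_⟩
  · rw [Units.val_pow_eq_pow_val, pow_mul, Units.val_one,
      ← pow_eq_self_iff_of_ne_zero (pow_ne_zero k u.ne_zero) hN]
    exact h u u.ne_zero
  · rw [pow_eq_self_iff_of_ne_zero (pow_ne_zero k hx) hN, ← pow_mul]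
    simpa using congrArg Units.val (h (Units.mk0 x hx))

theorem forall_nonzeroPowers_pow_eq_self_iff (k : ℕ) {N : ℕ} (hN : 0 < N) :
    (∀ y ∈ nonzeroPowers F k, y ^ N = y) ↔ Fintype.card F - 1 ∣ k * (N - 1) := by
  rw [← forall_pow_pow_eq_self_iff k hN]
  exact ⟨fun h x hx => h _ ⟨x, hx, rfl⟩, fun h _ ⟨x, hx, hy⟩ => hy ▸ h x hx⟩

theorem exists_pow_ne_self {N : ℕ} (h1 : 1 < N) (hN : N < Fintype.card F) : ∃ x : F, x ^ N ≠ x := by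
  by_contra! h
  have hdvd := (forall_pow_pow_eq_self_iff (F := F) 1 (N := N) (by omega)).mp fun x _ => by
    simp [h]
  have := Nat.le_of_dvd (by omega) hdvd
  omega

end FiniteField

theorem Subring.exists_pow_eq_self_of_ne_top {F : Type*} [Field F] [Fintype F] {p m : ℕ}
    [Fact p.Prime] [CharP F p] (hcard : Fintype.card F = p ^ m) {T : Subring F} (hT : T ≠ ⊤) :
    ∃ b, 0 < b ∧ b < m ∧ b ∣ m ∧ ∀ x ∈ T, x ^ p ^ b = x := by
  classical
  let _ : Field T := Fintype.fieldOfDomain T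
  have : CharP T p := T.subtype.charP Subtype.coe_injective p
  obtain ⟨b, -, hTcard⟩ := FiniteField.card T p
  obtain ⟨z, hz⟩ : ∃ z, z ∉ T := by simpa [Subring.eq_top_iff'] using hT
  have hlt : Fintype.card T < Fintype.card F := Fintype.card_subtype_lt (p := (· ∈ T)) hz
  have hdeg : p ^ m = p ^ (b * Module.finrank T F) := by
    rw [← hcard, pow_mul, ← hTcard, Module.card_eq_pow_finrank (K := T) (V := F)]
  rw [hTcard, hcard, Nat.pow_lt_pow_iff_right (Fact.out : p.Prime).one_lt] at hlt
  refine ⟨b, b.pos, hlt, ⟨_, Nat.pow_right_injective (Fact.out : p.Prime).two_le hdeg⟩, ?_⟩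
  intro x hx
  simpa [hTcard] using congrArg Subtype.val (FiniteField.pow_card (⟨x, hx⟩ : T))

theorem Rk_generates_iff_general (F : Type*) [Field F] [Fintype F] (p m k : ℕ)
    (hp : p.Prime) (hcard : Fintype.card F = p ^ m)
    (hkdvd : k ∣ p ^ m - 1) :
    AddSubgroup.closure {y : F | ∃ x : F, x ≠ 0 ∧ y = x ^ k} = ⊤ ↔
      ∀ a : ℕ, 1 ≤ a → a ≤ m - 1 → ¬ ((p ^ m - 1) / (p ^ a - 1) ∣ k) := by
  have := Fact.mk hp
  have : CharP F p := charP_of_card_eq_prime_pow hcard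
  change AddSubgroup.closure (nonzeroPowers F k : Set F) = ⊤ ↔ _
  rw [AddSubgroup.closure_submonoid_eq_top_iff]
  have hdiv_iff : ∀ b, 0 < b → b ∣ m → ((p ^ m - 1) / (p ^ b - 1) ∣ k ↔
      ∀ x ∈ Subring.closure (nonzeroPowers F k : Set F), x ^ p ^ b = x) := by
    intro b hb hbm
    rw [Nat.div_dvd_iff_dvd_mul (Nat.pow_sub_one_dvd_pow_sub_one p hbm)
      (Nat.sub_pos_of_lt (Nat.one_lt_pow hb.ne' hp.one_lt)), mul_comm, ← hcard,
      Subring.closure_pow_eq_self_iff]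
    exact (FiniteField.forall_nonzeroPowers_pow_eq_self_iff k (pow_pos hp.pos b)).symm
  constructor
  · intro htop a ha hma hdiv
    have hlt : a < m := by omega
    have hdvd : a ∣ m := Nat.dvd_of_div_pow_sub_one_dvd hp.one_lt ha hlt (hdiv.trans hkdvd)
    obtain ⟨x, hx⟩ := FiniteField.exists_pow_ne_self (F := F)
      (Nat.one_lt_pow (Nat.one_le_iff_ne_zero.mp ha) hp.one_lt)
      (hcard ▸ Nat.pow_lt_pow_right hp.one_lt hlt)
    exact hx ((hdiv_iff a ha hdvd).mp hdiv x (htop ▸ Subring.mem_top x))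
  · intro hcond
    by_contra htop
    obtain ⟨b, hb, hbm, hdvd, hfix⟩ := Subring.exists_pow_eq_self_of_ne_top hcard htop
    exact hcond b hb (by omega) ((hdiv_iff b hb hdvd).mpr hfix)

/-- For `q = p^m` and `k ∣ q - 1`, the set `R_k` of nonzero `k`-th powers additively
generates `F_q` iff `(q-1)/(p^a-1)` does not divide `k` for all `1 ≤ a ≤ m-1`. -/
theorem Rk_generates_iff (F : Type*) [Field F] [Fintype F] (p m k : ℕ)
    (hp : p.Prime) (hm : 0 < m) (hcard : Fintype.card F = p ^ m)
    (hk : 0 < k) (hkdvd : k ∣ p ^ m - 1) :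
    AddSubgroup.closure {y : F | ∃ x : F, x ≠ 0 ∧ y = x ^ k} = ⊤ ↔
      ∀ a : ℕ, 1 ≤ a → a ≤ m - 1 → ¬ ((p ^ m - 1) / (p ^ a - 1) ∣ k) :=
  Rk_generates_iff_general F p m k hp hcard hkdvd
end

section
/- Let r be an odd prime, x an integer with gcd(x, r) = 1, and t ≥ 1. Then Ψ_{r^t}(x) ≡ r^{t-h} · Ψ_{r^h}(x) (mod r^t) whenever the multiplicative order of x modulo r^t equals r^h with 0 ≤ h ≤ t-1. -/
/-! Since `x ^ (r ^ h) ≡ 1 (mod r ^ t)`, the powers of `x` are `r ^ h`-periodic modulo `r ^ t`, so the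
`r ^ t = r ^ h * r ^ (t - h)` terms of `Ψ_{r^t}(x)` fall into `r ^ (t - h)` blocks, each congruent
to `Ψ_{r^h}(x)`. -/

theorem sum_range_mul_pow_of_pow_eq_one {R : Type*} [CommSemiring R] {y : R} {d : ℕ}
    (hy : y ^ d = 1) (m : ℕ) :
    ∑ i ∈ Finset.range (d * m), y ^ i = m * ∑ i ∈ Finset.range d, y ^ i := by
  induction m with
  | zero => simp
  | succ m ih =>
    have hperiodic (i : ℕ) : y ^ (d * m + i) = y ^ i := by
      rw [pow_add, pow_mul, hy, one_pow, one_mul]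
    rw [Nat.mul_succ, Finset.sum_range_add, ih]
    simp only [hperiodic]
    push_cast
    ring

theorem psi_modeq_pow_mul_psi_general (r : ℕ)
    (x : ℤ) (t h : ℕ) (hh : h ≤ t - 1)
    (hord : orderOf (x : ZMod (r ^ t)) = r ^ h) :
    (∑ i ∈ Finset.range (r ^ t), x ^ i) ≡
      ((r ^ (t - h) : ℕ) : ℤ) * ∑ i ∈ Finset.range (r ^ h), x ^ i [ZMOD (r ^ t : ℕ)] := by
  have hsplit : r ^ t = r ^ h * r ^ (t - h) := by
    rw [← pow_add, Nat.add_sub_cancel' (hh.trans (Nat.sub_le t 1))]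
  have hperiod : (x : ZMod (r ^ t)) ^ r ^ h = 1 := hord ▸ pow_orderOf_eq_one _
  have hblocks := sum_range_mul_pow_of_pow_eq_one hperiod (r ^ (t - h))
  rw [← hsplit] at hblocks
  rw [← ZMod.intCast_eq_intCast_iff]
  push_cast
  exact_mod_cast hblocks

/-- For `r` an odd prime, `gcd(x,r)=1`, `t ≥ 1` and the order of `x` mod `r^t`
equal to `r^h` with `0 ≤ h ≤ t-1`:
`Ψ_{r^t}(x) ≡ r^{t-h} · Ψ_{r^h}(x) (mod r^t)`. -/
theorem psi_modeq_pow_mul_psi (r : ℕ) (hr : r.Prime) (hrodd : Odd r)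
    (x : ℤ) (hx : IsCoprime x (r : ℤ)) (t h : ℕ) (ht : 0 < t) (hh : h ≤ t - 1)
    (hord : orderOf (x : ZMod (r ^ t)) = r ^ h) :
    (∑ i ∈ Finset.range (r ^ t), x ^ i) ≡
      ((r ^ (t - h) : ℕ) : ℤ) * ∑ i ∈ Finset.range (r ^ h), x ^ i [ZMOD (r ^ t : ℕ)] :=
  psi_modeq_pow_mul_psi_general r x t h hh hord
end

section
/- Let p be a prime with p ∉ {3, 5} and a a positive integer. If p ≡ 1 (mod 15) then 15 divides Ψ_{15}(p^a); if p ≡ -1, 4, or -4 (mod 15) then 15 divides Ψ_{15}(p^{2a}); and if p ≡ ±2 or ±7 (mod 15) then 15 divides Ψ_{15}(p^{4a}). -/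
/-! If `q ≡ 1 (mod n)` then every term of `Ψ_n(q) = ∑_{i<n} q^i` is `≡ 1`, so `Ψ_n(q) ≡ n ≡ 0`.
Modulo 15 the residues `-1, ±4` have order dividing 2 and `±2, ±7` order dividing 4, so the
corresponding power `p^{2a}` or `p^{4a}` is `≡ 1`. -/

open Finset

theorem Nat.dvd_geom_sum_of_modEq_one {n q : ℕ} (h : q ≡ 1 [MOD n]) :
    n ∣ ∑ i ∈ range n, q ^ i := by
  have hsum : ∑ i ∈ range n, q ^ i ≡ ∑ i ∈ range n, 1 ^ i [MOD n] :=
    Nat.ModEq.sum fun i _ => h.pow i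
  simp only [one_pow, sum_const, card_range, smul_eq_mul, mul_one] at hsum
  exact (Nat.modEq_zero_iff_dvd).mp (hsum.trans (Nat.modEq_zero_iff_dvd.mpr dvd_rfl))

theorem Nat.ModEq.pow_mul_modEq_one {n p r k : ℕ} (hp : p ≡ r [MOD n])
    (hr : r ^ k ≡ 1 [MOD n]) (a : ℕ) : p ^ (k * a) ≡ 1 [MOD n] := by
  rw [pow_mul]
  simpa using ((hp.pow k).trans hr).pow a

theorem fifteen_dvd_psi_cases_general (p : ℕ)
    (a : ℕ) :
    (p ≡ 1 [MOD 15] → 15 ∣ ∑ i ∈ Finset.range 15, (p ^ a) ^ i) ∧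
    (p ≡ 14 [MOD 15] ∨ p ≡ 4 [MOD 15] ∨ p ≡ 11 [MOD 15] →
      15 ∣ ∑ i ∈ Finset.range 15, (p ^ (2 * a)) ^ i) ∧
    (p ≡ 2 [MOD 15] ∨ p ≡ 13 [MOD 15] ∨ p ≡ 7 [MOD 15] ∨ p ≡ 8 [MOD 15] →
      15 ∣ ∑ i ∈ Finset.range 15, (p ^ (4 * a)) ^ i) := by
  refine ⟨fun h => ?_, fun h => ?_, fun h => ?_⟩
  · exact Nat.dvd_geom_sum_of_modEq_one (by simpa using h.pow a)
  · apply Nat.dvd_geom_sum_of_modEq_one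
    rcases h with h | h | h <;> exact h.pow_mul_modEq_one (by decide) a
  · apply Nat.dvd_geom_sum_of_modEq_one
    rcases h with h | h | h | h <;> exact h.pow_mul_modEq_one (by decide) a

/-- For a prime `p ∉ {3,5}`: congruence conditions on `p` mod `15` ensuring
`15 ∣ Ψ_{15}(p^a)`, `15 ∣ Ψ_{15}(p^{2a})` or `15 ∣ Ψ_{15}(p^{4a})`. -/
theorem fifteen_dvd_psi_cases (p : ℕ) (hp : p.Prime) (hp3 : p ≠ 3) (hp5 : p ≠ 5)
    (a : ℕ) (ha : 0 < a) :
    (p ≡ 1 [MOD 15] → 15 ∣ ∑ i ∈ Finset.range 15, (p ^ a) ^ i) ∧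
    (p ≡ 14 [MOD 15] ∨ p ≡ 4 [MOD 15] ∨ p ≡ 11 [MOD 15] →
      15 ∣ ∑ i ∈ Finset.range 15, (p ^ (2 * a)) ^ i) ∧
    (p ≡ 2 [MOD 15] ∨ p ≡ 13 [MOD 15] ∨ p ≡ 7 [MOD 15] ∨ p ≡ 8 [MOD 15] →
      15 ∣ ∑ i ∈ Finset.range 15, (p ^ (4 * a)) ^ i) :=
  fifteen_dvd_psi_cases_general p a
end
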